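/- If s₁ and s₂ are independent uniformly random bitstrings of length m, then Pr[ED(s₁, s₂) ≤ D] ≤ (4e·m/D + 5e + 4e/D)^D / 2^m. -/

import Mathlib

/-! An edit script of cost at most `D` turning `s` into `t`, padded with `copy`s, is a word of
length `|s| + D` over a five-letter alphabet with at most `D` letters other than `copy`, and
together with `s` it determines `t`. Weighting every word by `x ^ (number of non-copy letters)`
bounds the size of this Hamming ball by `(1 + 4x) ^ (m + D) / x ^ D ≤ (4e (m + D) / D) ^ D` at
`x = D / (4 (m + D))`. Summing over the `2 ^ m` choices of `s` and dividing by `4 ^ m` gives the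
bound, as `4e (m + D) / D ≤ 4e·m/D + 5e + 4e/D`. -/

open Real Finset

/-! Levenshtein distance, as defined in Mathlib's former `Mathlib/Data/List/EditDistance/Defs.lean`
(removed since); reproduced here with its old meaning. -/

namespace Levenshtein

/-- A cost structure for Levenshtein edit distance. -/
structure Cost (α β δ : Type*) where
  /-- Cost to delete an element from a list. -/
  delete : α → δ
  /-- Cost in insert an element into a list. -/
  insert : β → δ
  /-- Cost to substitute one element for another in a list. -/
  substitute : α → β → δ

/-- The default cost structure, for which all operations cost `1`. -/
def defaultCost {α : Type*} [DecidableEq α] : Cost α α ℕ where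
  delete _ := 1
  insert _ := 1
  substitute a b := if a = b then 0 else 1

/-- (Implementation detail for `levenshtein`.) -/
def impl {α β δ : Type*} [AddZeroClass δ] [Min δ] (C : Cost α β δ)
    (xs : List α) (y : β) (d : {r : List δ // 0 < r.length}) : {r : List δ // 0 < r.length} :=
  let ⟨ds, w⟩ := d
  xs.zip (ds.zip ds.tail) |>.foldr
    (init := ⟨[C.insert y + ds.getLast (List.length_pos_iff.mp w)], by simp⟩)
    (fun ⟨x, d₀, d₁⟩ ⟨r, w⟩ =>
      ⟨min (C.delete x + r[0]) (min (C.insert y + d₀) (C.substitute x y + d₁)) :: r, by simp⟩)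

end Levenshtein

open Levenshtein

/-- `suffixLevenshtein C xs ys` computes the Levenshtein distance
(using the cost functions provided by a `C : Cost α β δ`)
from each suffix of the list `xs` to the list `ys`. -/
def suffixLevenshtein {α β δ : Type*} [AddZeroClass δ] [Min δ] (C : Cost α β δ)
    (xs : List α) (ys : List β) : {r : List δ // 0 < r.length} :=
  ys.foldr
    (impl C xs)
    (xs.foldr (init := ⟨[0], by simp⟩) (fun a ⟨r, w⟩ => ⟨(C.delete a + r[0]) :: r, by simp⟩))

/-- `levenshtein C xs ys` computes the Levenshtein distance
(using the cost functions provided by a `C : Cost α β δ`)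
from the list `xs` to the list `ys`. -/
def levenshtein {α β δ : Type*} [AddZeroClass δ] [Min δ] (C : Cost α β δ)
    (xs : List α) (ys : List β) : δ :=
  let ⟨r, w⟩ := suffixLevenshtein C xs ys
  r[0]

namespace Levenshtein

variable {α β δ : Type*} [AddZeroClass δ] [Min δ] {C : Cost α β δ}

theorem defaultCost_delete [DecidableEq α] (a : α) :
    (defaultCost : Cost α α ℕ).delete a = 1 := rfl

theorem defaultCost_insert [DecidableEq α] (a : α) :
    (defaultCost : Cost α α ℕ).insert a = 1 := rfl

theorem impl_cons {x : α} {xs : List α} {y : β} {d : δ} {ds : List δ}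
    {w : 0 < (d :: ds).length} (w' : 0 < ds.length) :
    impl C (x :: xs) y ⟨d :: ds, w⟩ =
      let ⟨r, w⟩ := impl C xs y ⟨ds, w'⟩
      ⟨min (C.delete x + r[0]) (min (C.insert y + d) (C.substitute x y + ds[0])) :: r, by simp⟩ :=
  match ds, w' with | _ :: _, _ => rfl

theorem impl_length (xs : List α) (y : β) (d : {r : List δ // 0 < r.length})
    (w : d.1.length = xs.length + 1) : (impl C xs y d).1.length = xs.length + 1 := by
  induction xs generalizing d with
  | nil => rfl
  | cons x xs ih =>
    match d, w with
    | ⟨_ :: d₂ :: ds, _⟩, w =>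
      rw [impl_cons (by simp)]
      simpa using ih ⟨d₂ :: ds, by simp⟩ (by simpa using w)

theorem suffixLevenshtein_length (xs : List α) (ys : List β) :
    (suffixLevenshtein C xs ys).1.length = xs.length + 1 := by
  induction ys with
  | nil =>
    induction xs with
    | nil => rfl
    | cons _ xs ih => simpa [suffixLevenshtein] using ih
  | cons y ys ih => exact impl_length xs y _ ih

theorem suffixLevenshtein_cons_left (x : α) (xs : List α) (ys : List β) :
    suffixLevenshtein C (x :: xs) ys =
      ⟨levenshtein C (x :: xs) ys :: (suffixLevenshtein C xs ys).1, by simp⟩ := by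
  induction ys with
  | nil => rfl
  | cons y ys ih =>
    have ext_of_head_tail : ∀ {u v : {r : List δ // 0 < r.length}},
        u.1[0]'u.2 = v.1[0]'v.2 → u.1.tail = v.1.tail → u = v := by
      intro u v h₀ h
      match u, v with
      | ⟨_ :: _, _⟩, ⟨_ :: _, _⟩ => simp_all
    refine ext_of_head_tail rfl ?_
    change (impl C (x :: xs) y (suffixLevenshtein C (x :: xs) ys)).1.tail = _
    rw [ih, impl_cons (by simp [suffixLevenshtein_length])]
    rfl

theorem levenshtein_nil_cons (y : β) (ys : List β) :
    levenshtein C ([] : List α) (y :: ys) = C.insert y + levenshtein C [] ys := by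
  have impl_nil : ∀ d : {r : List δ // 0 < r.length}, d.1.length = 1 →
      ∀ h, (impl C ([] : List α) y d).1[0]'h = C.insert y + d.1[0]'d.2 := by
    rintro ⟨_ | ⟨_, _ | _⟩, _⟩ hd _ <;> first | rfl | simp at hd
  exact impl_nil _ (suffixLevenshtein_length [] ys) _

theorem levenshtein_cons_nil (x : α) (xs : List α) :
    levenshtein C (x :: xs) ([] : List β) = C.delete x + levenshtein C xs [] := rfl

theorem levenshtein_cons_cons (x : α) (xs : List α) (y : β) (ys : List β) :
    levenshtein C (x :: xs) (y :: ys) =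
      min (C.delete x + levenshtein C xs (y :: ys))
        (min (C.insert y + levenshtein C (x :: xs) ys)
          (C.substitute x y + levenshtein C xs ys)) := by
  have unfold_left : suffixLevenshtein C (x :: xs) (y :: ys) =
      impl C (x :: xs) y (suffixLevenshtein C (x :: xs) ys) := rfl
  conv_lhs => simp only [levenshtein]
  rw [unfold_left, suffixLevenshtein_cons_left, impl_cons (by simp [suffixLevenshtein_length])]
  rfl

end Levenshtein

theorem List.ofFn_getD_eq_append_replicate {α : Type*} (σ : List α) (c : α) {n : ℕ}
    (h : σ.length ≤ n) :
    List.ofFn (fun j : Fin n => σ.getD j c) = σ ++ List.replicate (n - σ.length) c := by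
  apply List.ext_getElem
  · simp only [List.length_ofFn, List.length_append, List.length_replicate]
    omega
  · intro j _ _
    simp only [List.getElem_ofFn, List.getD_eq_getElem?_getD, List.getElem_append]
    split_ifs <;> simp_all

theorem Fin.card_filter_univ_eq_countP_ofFn {α : Type*} {n : ℕ} (w : Fin n → α) (p : α → Prop)
    [DecidablePred p] : #{j | p (w j)} = (List.ofFn w).countP p := by
  induction n with
  | zero => simp
  | succ n ih =>
    rw [Fin.card_filter_univ_succ, List.ofFn_succ, List.countP_cons, ih]
    split_ifs <;> simp_all

inductive EditOp where
  | copy | delete | flip | insert (b : Bool)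
  deriving DecidableEq, Fintype, Inhabited

namespace EditOp

theorem card_eq_five : Fintype.card EditOp = 5 := rfl

/-- Operations that would read past the end of the input are skipped and unread input is copied,
so that appending `copy`s to a script does not change its effect. -/
def run : List EditOp → List Bool → List Bool
  | [], s => s
  | copy :: σ, a :: s => a :: run σ s
  | delete :: σ, _ :: s => run σ s
  | flip :: σ, a :: s => (!a) :: run σ s
  | insert b :: σ, s => b :: run σ s
  | _ :: σ, [] => run σ []

def cost (σ : List EditOp) : ℕ := σ.countP (· ≠ copy)

@[simp] theorem cost_nil : cost [] = 0 := rfl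

@[simp] theorem cost_cons (o : EditOp) (σ : List EditOp) :
    cost (o :: σ) = cost σ + if o = copy then 0 else 1 := by
  by_cases h : o = copy <;> simp [cost, h]

theorem run_replicate_copy (k : ℕ) (s : List Bool) : run (List.replicate k copy) s = s := by
  induction k generalizing s with
  | zero => rfl
  | succ k ih => cases s <;> simp [List.replicate_succ, run, ih]

theorem run_append_replicate_copy (σ : List EditOp) (k : ℕ) (s : List Bool) :
    run (σ ++ List.replicate k copy) s = run σ s := by
  induction σ generalizing s with
  | nil => exact run_replicate_copy k s
  | cons o σ ih => cases o <;> cases s <;> simp [run, ih]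

theorem exists_run_eq_cost_le_levenshtein (s t : List Bool) :
    ∃ σ, run σ s = t ∧ σ.length ≤ s.length + cost σ ∧
      cost σ ≤ levenshtein defaultCost s t := by
  induction s generalizing t with
  | nil =>
    induction t with
    | nil => exact ⟨[], rfl, by simp, by simp⟩
    | cons b t ih =>
      obtain ⟨σ, hrun, hlen, hcost⟩ := ih
      refine ⟨insert b :: σ, by simp [run, hrun], by grind [cost_cons], ?_⟩
      rw [levenshtein_nil_cons, defaultCost_insert]
      grind [cost_cons]
  | cons a s ih =>
    induction t with
    | nil =>
      obtain ⟨σ, hrun, hlen, hcost⟩ := ih []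
      refine ⟨delete :: σ, by simp [run, hrun], by grind [cost_cons], ?_⟩
      rw [levenshtein_cons_nil, defaultCost_delete]
      grind [cost_cons]
    | cons b t ih_insert =>
      let Within (n : ℕ) : Prop := ∃ σ, run σ (a :: s) = b :: t ∧
        σ.length ≤ (a :: s).length + cost σ ∧ cost σ ≤ n
      have via_delete : Within (1 + levenshtein defaultCost s (b :: t)) := by
        obtain ⟨σ, hrun, hlen, hcost⟩ := ih (b :: t)
        exact ⟨delete :: σ, by simp [run, hrun], by grind [cost_cons], by grind [cost_cons]⟩
      have via_insert : Within (1 + levenshtein defaultCost (a :: s) t) := by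
        obtain ⟨σ, hrun, hlen, hcost⟩ := ih_insert
        exact ⟨insert b :: σ, by simp [run, hrun], by grind [cost_cons], by grind [cost_cons]⟩
      have via_substitute :
          Within ((if a = b then 0 else 1) + levenshtein defaultCost s t) := by
        obtain ⟨σ, hrun, hlen, hcost⟩ := ih t
        by_cases hab : a = b
        · exact ⟨copy :: σ, by simp [run, hrun, hab], by grind [cost_cons], by grind [cost_cons]⟩
        · refine ⟨flip :: σ, ?_, by grind [cost_cons], by grind [cost_cons]⟩
          cases a <;> cases b <;> simp_all [run]
      rw [levenshtein_cons_cons]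
      exact min_rec' Within via_delete (min_rec' Within via_insert via_substitute)

theorem exists_word_of_levenshtein_le {s t : List Bool} {D : ℕ}
    (h : levenshtein defaultCost s t ≤ D) :
    ∃ w : Fin (s.length + D) → EditOp,
      hammingDist w (fun _ => copy) ≤ D ∧ run (List.ofFn w) s = t := by
  obtain ⟨σ, hrun, hlen, hcost⟩ := exists_run_eq_cost_le_levenshtein s t
  have hσ : σ.length ≤ s.length + D := by omega
  refine ⟨fun j => σ.getD j copy, ?_, ?_⟩
  · rw [hammingDist, Fin.card_filter_univ_eq_countP_ofFn (fun j => σ.getD j copy) (· ≠ copy),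
      List.ofFn_getD_eq_append_replicate σ copy hσ, List.countP_append,
      List.countP_replicate]
    simpa [cost] using hcost.trans h
  · rw [List.ofFn_getD_eq_append_replicate σ copy hσ, run_append_replicate_copy, hrun]

end EditOp

section HammingBall

variable {ι α : Type*} [Fintype ι] [DecidableEq ι] [Fintype α] [DecidableEq α]

theorem sum_pow_hammingDist (g : ι → α) (x : ℝ) :
    ∑ f : ι → α, x ^ hammingDist f g = (1 + (Fintype.card α - 1) * x) ^ Fintype.card ι := by
  have pow_hammingDist (f : ι → α) : x ^ hammingDist f g = ∏ i, if f i ≠ g i then x else 1 := by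
    rw [Finset.prod_ite, prod_const, prod_const_one, mul_one]
    rfl
  have sum_weight (i : ι) : ∑ a, (if a ≠ g i then x else 1) = 1 + (Fintype.card α - 1) * x := by
    have : 1 ≤ Fintype.card α := Fintype.card_pos_iff.2 ⟨g i⟩
    rw [Fintype.sum_eq_add_sum_compl (g i), if_neg (not_not_intro rfl),
      sum_congr rfl fun a ha => if_pos (by simpa using ha), sum_const, card_compl,
      card_singleton, nsmul_eq_mul, Nat.cast_sub this, Nat.cast_one]
  calc ∑ f : ι → α, x ^ hammingDist f g = ∑ f : ι → α, ∏ i, if f i ≠ g i then x else 1 :=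
        sum_congr rfl fun f _ => pow_hammingDist f
    _ = ∏ i, ∑ a, if a ≠ g i then x else 1 :=
        (Fintype.prod_sum fun i (a : α) => if a ≠ g i then x else 1).symm
    _ = _ := by simp_rw [sum_weight, prod_const, card_univ]

theorem card_filter_hammingDist_le_mul_pow_le (g : ι → α) (D : ℕ) {x : ℝ} (hx₀ : 0 ≤ x)
    (hx₁ : x ≤ 1) :
    (#{f | hammingDist f g ≤ D} : ℝ) * x ^ D ≤
      (1 + (Fintype.card α - 1) * x) ^ Fintype.card ι :=
  calc (#{f | hammingDist f g ≤ D} : ℝ) * x ^ D = ∑ f with hammingDist f g ≤ D, x ^ D := by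
        rw [sum_const, nsmul_eq_mul]
    _ ≤ ∑ f with hammingDist f g ≤ D, x ^ hammingDist f g :=
        sum_le_sum fun f hf => pow_le_pow_of_le_one hx₀ hx₁ (mem_filter.1 hf).2
    _ ≤ ∑ f, x ^ hammingDist f g :=
        sum_le_sum_of_subset_of_nonneg (filter_subset _ _) fun _ _ _ => by positivity
    _ = _ := sum_pow_hammingDist g x

theorem card_filter_hammingDist_le_le (g : ι → α) {D : ℕ} (hD : 0 < D)
    (hDq : (D : ℝ) ≤ (Fintype.card α - 1) * Fintype.card ι) :
    (#{f | hammingDist f g ≤ D} : ℝ) ≤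
      (exp 1 * ((Fintype.card α - 1) * Fintype.card ι) / D) ^ D := by
  set N : ℝ := (Fintype.card α - 1) * Fintype.card ι
  have hD' : (0 : ℝ) < D := by exact_mod_cast hD
  have hN : 0 < N := hD'.trans_le hDq
  have hq : 0 < (Fintype.card α : ℝ) - 1 := pos_of_mul_pos_left hN (Nat.cast_nonneg _)
  set x : ℝ := D / N with hx
  have hx₀ : 0 < x := div_pos hD' hN
  have hx₁ : x ≤ 1 := div_le_one_of_le₀ hDq hN.le
  have exp_bound : (1 + (Fintype.card α - 1) * x) ^ Fintype.card ι ≤ exp 1 ^ D := by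
    calc (1 + (Fintype.card α - 1) * x) ^ Fintype.card ι
        ≤ exp ((Fintype.card α - 1) * x) ^ Fintype.card ι := by
          gcongr
          linarith [add_one_le_exp ((Fintype.card α - 1) * x)]
      _ = exp 1 ^ D := by
          rw [← exp_nat_mul, ← exp_nat_mul, hx]
          congr 1
          field_simp
          ring
  calc (#{f | hammingDist f g ≤ D} : ℝ)
      ≤ (1 + (Fintype.card α - 1) * x) ^ Fintype.card ι / x ^ D :=
        (le_div_iff₀ (pow_pos hx₀ D)).2 (card_filter_hammingDist_le_mul_pow_le g D hx₀.le hx₁)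
    _ ≤ exp 1 ^ D / x ^ D := by gcongr
    _ = (exp 1 * N / D) ^ D := by rw [← div_pow, hx, div_div_eq_mul_div]

end HammingBall

theorem card_levenshtein_ball_le (s : List Bool) (m : ℕ) {D : ℕ} (hD : 0 < D) :
    (#{t : Fin m → Bool | levenshtein defaultCost s (List.ofFn t) ≤ D} : ℝ) ≤
      (4 * exp 1 * (s.length + D) / D) ^ D := by
  have hword : ∀ t : Fin m → Bool, levenshtein defaultCost s (List.ofFn t) ≤ D →
      ∃ w : Fin (s.length + D) → EditOp,
        hammingDist w (fun _ => EditOp.copy) ≤ D ∧ EditOp.run (List.ofFn w) s = List.ofFn t :=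
    fun _ ht => EditOp.exists_word_of_levenshtein_le ht
  choose! word hword_dist hword_run using hword
  have ball_le_hammingBall :
      #{t : Fin m → Bool | levenshtein defaultCost s (List.ofFn t) ≤ D} ≤
        #{w : Fin (s.length + D) → EditOp | hammingDist w (fun _ => EditOp.copy) ≤ D} := by
    refine card_le_card_of_injOn word (fun t ht => ?_) (fun t ht t' ht' h => ?_)
    · simp only [coe_filter, mem_univ, true_and, Set.mem_ofPred_eq] at ht ⊢
      exact hword_dist t ht
    · simp only [coe_filter, mem_univ, true_and, Set.mem_ofPred_eq] at ht ht'
      apply List.ofFn_injective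
      rw [← hword_run t ht, ← hword_run t' ht', h]
  have hDq : (D : ℝ) ≤ (Fintype.card EditOp - 1) * Fintype.card (Fin (s.length + D)) := by
    simp only [EditOp.card_eq_five, Fintype.card_fin]
    push_cast
    linarith
  calc _ ≤ _ := by exact_mod_cast ball_le_hammingBall
    _ ≤ _ := card_filter_hammingDist_le_le _ hD hDq
    _ = _ := by
      simp only [EditOp.card_eq_five, Fintype.card_fin]
      push_cast
      ring

theorem card_filter_prod_le_card_mul {α β : Type*} [Fintype α] [Fintype β] (P : α × β → Prop)
    [DecidablePred P] {B : ℝ} (h : ∀ a, (#{b | P (a, b)} : ℝ) ≤ B) :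
    (#{p | P p} : ℝ) ≤ Fintype.card α * B := by
  rw [card_filter, Fintype.sum_prod_type]
  simp_rw [← card_filter]
  push_cast
  simpa using sum_le_card_nsmul univ _ B fun a _ => h a

/-- If `s₁` and `s₂` are independent uniformly random bitstrings of length `m`,
then `Pr[ED(s₁, s₂) ≤ D] ≤ (4e·m/D + 5e + 4e/D)^D / 2^m`. The probability is
the fraction of the `4^m` pairs of bitstrings within edit distance `D`. -/
theorem random_strings_levenshtein_lower_tail (m D : ℕ) (hD : 0 < D) :
    ((Finset.univ.filter fun p : (Fin m → Bool) × (Fin m → Bool) =>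
          levenshtein Levenshtein.defaultCost (List.ofFn p.1) (List.ofFn p.2) ≤ D).card : ℝ) /
        4 ^ m ≤
      (4 * Real.exp 1 * m / D + 5 * Real.exp 1 + 4 * Real.exp 1 / D) ^ D / 2 ^ m := by
  have pairs := card_filter_prod_le_card_mul
    (fun p : (Fin m → Bool) × (Fin m → Bool) =>
      levenshtein defaultCost (List.ofFn p.1) (List.ofFn p.2) ≤ D)
    fun s => (List.length_ofFn (f := s)) ▸ card_levenshtein_ball_le (List.ofFn s) m hD
  have hD' : (0 : ℝ) < D := by exact_mod_cast hD
  have base_le : 4 * exp 1 * (m + D) / D ≤ 4 * exp 1 * m / D + 5 * exp 1 + 4 * exp 1 / D := by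
    rw [mul_add, add_div, mul_div_assoc (4 * exp 1) (D : ℝ), div_self hD'.ne']
    linarith [exp_pos 1, div_pos (by positivity : 0 < 4 * exp 1) hD']
  calc _ ≤ 2 ^ m * (4 * exp 1 * (m + D) / D) ^ D / 4 ^ m := by
        gcongr
        simpa using pairs
    _ = (4 * exp 1 * (m + D) / D) ^ D / 2 ^ m := by
        rw [show (4 : ℝ) ^ m = 2 ^ m * 2 ^ m by rw [← mul_pow]; norm_num]
        field_simp
    _ ≤ _ := by gcongr
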